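/- For every integer n ≥ 2, the number of partitions of n in which the smallest part appears exactly twice and every other part appears exactly once equals 2·A(n−1) − A(n), where A(k) is the number of partitions of k into distinct parts. -/

import Mathlib

/-- `A n`: number of partitions of `n` into distinct parts. -/
noncomputable def A (n : ℕ) : ℕ := Nat.card {p : n.Partition // p.parts.Nodup}

/-!
Call a partition nearly distinct (`NodupExceptMin`) when its smallest part occurs at most
twice and every other part once. Nearly distinct partitions of `n` are either distinct or of
the kind counted here, so the count is `N(n) - A(n)`, where `N(n)` counts nearly distinct
partitions. Moreover `N(n) = 2 A(n - 1)`: removing a part `1` matches those containing `1`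
with distinct partitions of `n - 1`, and lowering one copy `m` of the smallest part to `m - 1`
matches the others with distinct partitions of `n - 1` as well, the inverse raising the
smallest part by one.
-/

theorem Nat.card_eq_card_and_add_card_and_not {α : Type*} [Finite α] (p q : α → Prop) :
    Nat.card {x // p x} = Nat.card {x // p x ∧ q x} + Nat.card {x // p x ∧ ¬q x} := by
  classical
  rw [← Nat.card_sum]
  exact Nat.card_congr <| (Equiv.sumCompl fun x : {x // p x} ↦ q x.1).symm.trans <|
    Equiv.sumCongr (Equiv.subtypeSubtypeEquivSubtypeInter p q)
      (Equiv.subtypeSubtypeEquivSubtypeInter p (¬q ·))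

namespace Multiset

/-- The least element of `s`, with the junk value `0` for `s = 0`. -/
noncomputable def natMin (s : Multiset ℕ) : ℕ := sInf {a | a ∈ s}

def NodupExceptMin (s : Multiset ℕ) : Prop := (s.erase s.natMin).Nodup

noncomputable def bumpMin (s : Multiset ℕ) : Multiset ℕ := (s.natMin + 1) ::ₘ s.erase s.natMin

noncomputable def lowerMin (s : Multiset ℕ) : Multiset ℕ := (s.natMin - 1) ::ₘ s.erase s.natMin

variable {s : Multiset ℕ} {a b : ℕ}

theorem natMin_zero : (0 : Multiset ℕ).natMin = 0 := by
  simp [natMin]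

theorem natMin_mem (hs : s ≠ 0) : s.natMin ∈ s :=
  Nat.sInf_mem (exists_mem_of_ne_zero hs)

theorem natMin_le (hb : b ∈ s) : s.natMin ≤ b :=
  Nat.sInf_le hb

theorem notMem_of_lt_natMin (hb : b < s.natMin) : b ∉ s :=
  fun hbs ↦ (natMin_le hbs).not_gt hb

theorem ne_zero_of_natMin_pos (h : 0 < s.natMin) : s ≠ 0 := by
  rintro rfl
  simp [natMin_zero] at h

theorem natMin_cons_of_forall_le (h : ∀ b ∈ s, a ≤ b) : (a ::ₘ s).natMin = a := by
  refine le_antisymm (natMin_le (mem_cons_self a s)) ?_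
  rcases mem_cons.1 (natMin_mem cons_ne_zero) with hm | hm
  · exact hm.ge
  · exact h _ hm

theorem natMin_add_sum_erase (s : Multiset ℕ) : s.natMin + (s.erase s.natMin).sum = s.sum := by
  rcases eq_or_ne s 0 with rfl | hs
  · simp [natMin_zero]
  · exact sum_erase (natMin_mem hs)

theorem natMin_lt_of_mem_erase (hs : s.Nodup) (hb : b ∈ s.erase s.natMin) : s.natMin < b := by
  obtain ⟨hne, hbs⟩ := hs.mem_erase_iff.1 hb
  exact (natMin_le hbs).lt_of_ne' hne

theorem nodupExceptMin_iff_count :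
    s.NodupExceptMin ↔ s.count s.natMin ≤ 2 ∧ ∀ x ≠ s.natMin, s.count x ≤ 1 := by
  rw [NodupExceptMin, nodup_iff_count_le_one]
  constructor
  · intro h
    refine ⟨?_, fun x hx ↦ ?_⟩
    · have := h s.natMin
      rw [count_erase_self] at this
      omega
    · simpa [count_erase_of_ne hx] using h x
  · rintro ⟨hmin, hother⟩ x
    by_cases hx : x = s.natMin
    · rw [hx, count_erase_self]
      omega
    · rw [count_erase_of_ne hx]
      exact hother x hx

theorem NodupExceptMin.of_nodup (hs : s.Nodup) : s.NodupExceptMin :=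
  hs.erase _

theorem minTwice_iff (hs : s ≠ 0) :
    (∀ a ∈ s, (s.count a = 2 ∧ ∀ b ∈ s, a ≤ b) ∨ (s.count a = 1 ∧ ∃ b ∈ s, b < a)) ↔
      s.NodupExceptMin ∧ ¬s.Nodup := by
  have hm := natMin_mem hs
  simp only [nodupExceptMin_iff_count, nodup_iff_count_le_one, not_forall, not_le]
  constructor
  · intro h
    have hm2 : s.count s.natMin = 2 := by
      rcases h _ hm with ⟨h2, -⟩ | ⟨-, b, hb, hlt⟩
      · exact h2
      · exact absurd (natMin_le hb) hlt.not_ge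
    refine ⟨⟨hm2.le, fun x hx ↦ ?_⟩, s.natMin, by omega⟩
    by_cases hxs : x ∈ s
    · rcases h x hxs with ⟨-, hxmin⟩ | ⟨h1, -⟩
      · exact absurd (le_antisymm (hxmin _ hm) (natMin_le hxs)) hx
      · exact h1.le
    · simp [count_eq_zero_of_notMem hxs]
  · rintro ⟨⟨hmin, hother⟩, c, hc⟩ a ha
    obtain rfl : c = s.natMin := by
      by_contra hne
      exact (hother c hne).not_gt hc
    by_cases ham : a = s.natMin
    · subst ham
      exact Or.inl ⟨by omega, fun b hb ↦ natMin_le hb⟩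
    · exact Or.inr ⟨le_antisymm (hother a ham) (count_pos.2 ha), s.natMin, hm,
        (natMin_le ha).lt_of_ne' ham⟩

theorem natMin_bumpMin (hs : s.Nodup) : s.bumpMin.natMin = s.natMin + 1 :=
  natMin_cons_of_forall_le fun _ hb ↦ natMin_lt_of_mem_erase hs hb

theorem nodupExceptMin_bumpMin (hs : s.Nodup) : s.bumpMin.NodupExceptMin := by
  rw [NodupExceptMin, natMin_bumpMin hs, bumpMin, erase_cons_head]
  exact hs.erase _

theorem sum_bumpMin (s : Multiset ℕ) : s.bumpMin.sum = s.sum + 1 := by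
  rw [bumpMin, sum_cons, ← natMin_add_sum_erase s]
  ring

theorem natMin_lowerMin (s : Multiset ℕ) : s.lowerMin.natMin = s.natMin - 1 :=
  natMin_cons_of_forall_le fun _ hb ↦ (Nat.sub_le _ _).trans (natMin_le (mem_of_mem_erase hb))

theorem nodup_lowerMin (hs : s.NodupExceptMin) (h : 0 < s.natMin) : s.lowerMin.Nodup :=
  nodup_cons.2 ⟨fun hm ↦ by have := natMin_le (mem_of_mem_erase hm); omega, hs⟩

theorem sum_lowerMin (h : 0 < s.natMin) : s.lowerMin.sum + 1 = s.sum := by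
  rw [lowerMin, sum_cons, ← natMin_add_sum_erase s]
  omega

theorem lowerMin_bumpMin (hs : s.Nodup) (h0 : s ≠ 0) : s.bumpMin.lowerMin = s := by
  rw [lowerMin, natMin_bumpMin hs, bumpMin, erase_cons_head, Nat.add_sub_cancel,
    cons_erase (natMin_mem h0)]

theorem bumpMin_lowerMin (h : 0 < s.natMin) : s.lowerMin.bumpMin = s := by
  rw [bumpMin, natMin_lowerMin, lowerMin, erase_cons_head, Nat.sub_add_cancel h,
    cons_erase (natMin_mem (ne_zero_of_natMin_pos h))]

end Multiset

namespace Nat.Partition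

open Multiset

variable {n : ℕ}

theorem parts_ne_zero (p : n.Partition) (hn : n ≠ 0) : p.parts ≠ 0 := by
  intro h
  have := p.parts_sum
  simp only [h, sum_zero] at this
  omega

theorem natMin_parts_pos (p : n.Partition) (hn : n ≠ 0) : 0 < p.parts.natMin :=
  p.parts_pos (natMin_mem (p.parts_ne_zero hn))

theorem natMin_parts_eq_one (p : n.Partition) (h : 1 ∈ p.parts) : p.parts.natMin = 1 :=
  le_antisymm (natMin_le h) (p.parts_pos (natMin_mem (by rintro h0; simp [h0] at h)))

theorem one_lt_natMin_parts (p : (n + 1).Partition) (h : 1 ∉ p.parts) : 1 < p.parts.natMin := by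
  have hmem := natMin_mem (p.parts_ne_zero n.add_one_ne_zero)
  have hpos := p.parts_pos hmem
  have hne : p.parts.natMin ≠ 1 := by
    rintro h1
    exact h (by rwa [h1] at hmem)
  omega

noncomputable def bumpMin (p : n.Partition) : (n + 1).Partition where
  parts := p.parts.bumpMin
  parts_pos hi := by
    rcases mem_cons.1 hi with rfl | hi
    · omega
    · exact p.parts_pos (mem_of_mem_erase hi)
  parts_sum := by rw [sum_bumpMin, p.parts_sum]

noncomputable def lowerMin (p : (n + 1).Partition) (h : 1 ∉ p.parts) : n.Partition where
  parts := p.parts.lowerMin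
  parts_pos hi := by
    rcases mem_cons.1 hi with rfl | hi
    · have := p.one_lt_natMin_parts h
      omega
    · exact p.parts_pos (mem_of_mem_erase hi)
  parts_sum := by
    have := sum_lowerMin (p.natMin_parts_pos n.add_one_ne_zero)
    rw [p.parts_sum] at this
    omega

theorem one_notMem_bumpMin (p : n.Partition) (hn : n ≠ 0) (hp : p.parts.Nodup) :
    1 ∉ p.bumpMin.parts := by
  apply notMem_of_lt_natMin
  rw [bumpMin, natMin_bumpMin hp]
  have := p.natMin_parts_pos hn
  omega

noncomputable def bumpMinEquiv (hn : n ≠ 0) :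
    {q : n.Partition // q.parts.Nodup} ≃
      {p : (n + 1).Partition // p.parts.NodupExceptMin ∧ 1 ∉ p.parts} where
  toFun q := ⟨q.1.bumpMin, nodupExceptMin_bumpMin q.2, q.1.one_notMem_bumpMin hn q.2⟩
  invFun p := ⟨p.1.lowerMin p.2.2,
    nodup_lowerMin p.2.1 (p.1.natMin_parts_pos n.add_one_ne_zero)⟩
  left_inv q := Subtype.ext <| Nat.Partition.ext <| lowerMin_bumpMin q.2 (q.1.parts_ne_zero hn)
  right_inv p := Subtype.ext <| Nat.Partition.ext <|
    bumpMin_lowerMin (p.1.natMin_parts_pos n.add_one_ne_zero)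

theorem card_nodupExceptMin_one_mem (hn : n ≠ 0) :
    Nat.card {p : n.Partition // p.parts.NodupExceptMin ∧ 1 ∈ p.parts} = A (n - 1) :=
  Nat.card_congr <|
    ((Equiv.subtypeSubtypeEquivSubtypeInter (fun p : n.Partition ↦ 1 ∈ p.parts)
      (·.parts.NodupExceptMin)).trans
      (Equiv.subtypeEquivRight fun _ ↦ and_comm)).symm.trans <|
    Equiv.subtypeEquiv (partitionWithPartEquiv le_rfl (Nat.one_le_iff_ne_zero.2 hn)) fun p ↦ by
      rw [partitionWithPartEquiv_apply_parts, NodupExceptMin, p.1.natMin_parts_eq_one p.2]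

theorem card_nodupExceptMin_one_notMem (hn : n ≠ 0) :
    Nat.card {p : (n + 1).Partition // p.parts.NodupExceptMin ∧ 1 ∉ p.parts} = A n :=
  (Nat.card_congr (bumpMinEquiv hn)).symm

theorem card_nodupExceptMin (hn : n ≠ 0) :
    Nat.card {p : (n + 1).Partition // p.parts.NodupExceptMin} = 2 * A n := by
  rw [Nat.card_eq_card_and_add_card_and_not _ fun p : (n + 1).Partition ↦ 1 ∈ p.parts,
    card_nodupExceptMin_one_mem n.add_one_ne_zero, card_nodupExceptMin_one_notMem hn,
    Nat.add_sub_cancel]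
  ring

theorem card_minTwice_add_card_nodup (hn : n ≠ 0) :
    Nat.card {p : n.Partition // ∀ a ∈ p.parts,
        (p.parts.count a = 2 ∧ ∀ b ∈ p.parts, a ≤ b) ∨
        (p.parts.count a = 1 ∧ ∃ b ∈ p.parts, b < a)} + A n =
      Nat.card {p : n.Partition // p.parts.NodupExceptMin} := by
  have hminTwice := Nat.card_congr
    (Equiv.subtypeEquivRight fun p : n.Partition ↦ minTwice_iff (p.parts_ne_zero hn))
  have hnodup : Nat.card {p : n.Partition // p.parts.NodupExceptMin ∧ p.parts.Nodup} = A n :=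
    Nat.card_congr (Equiv.subtypeEquivRight fun _ ↦ and_iff_right_of_imp NodupExceptMin.of_nodup)
  rw [Nat.card_eq_card_and_add_card_and_not (fun p : n.Partition ↦ p.parts.NodupExceptMin)
    (fun p ↦ p.parts.Nodup), hnodup, hminTwice, add_comm]

end Nat.Partition

/-- For every integer `n ≥ 2`, the number of partitions of `n` in which the
smallest part appears exactly twice and every other part appears exactly once
equals `2 * A (n-1) - A n` (as integers). -/
theorem min_twice_count (n : ℕ) (hn : 2 ≤ n) :
    (Nat.card {p : n.Partition //
        ∀ a ∈ p.parts,
          (p.parts.count a = 2 ∧ ∀ b ∈ p.parts, a ≤ b) ∨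
          (p.parts.count a = 1 ∧ ∃ b ∈ p.parts, b < a)} : ℤ) =
      2 * A (n - 1) - A n := by
  obtain ⟨k, rfl⟩ : ∃ k, n = k + 1 := ⟨n - 1, by omega⟩
  have hsplit := Nat.Partition.card_minTwice_add_card_nodup k.add_one_ne_zero
  have hcount := Nat.Partition.card_nodupExceptMin (n := k) (by omega)
  rw [Nat.add_sub_cancel]
  omega
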